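/- (Helly-type selection principle.) Let X be a real Banach space, D : X × X → [0,∞] a map satisfying the triangle inequality, the coercivity D(z0,z1) ≥ c_D‖z1 − z0‖ with c_D > 0, and sequential weak lower semicontinuity (z_j ⇀ z, ẑ_j ⇀ ẑ imply D(z,ẑ) ≤ liminf_j D(z_j,ẑ_j)). Let K ⊂ X be sequentially weakly compact and let z^(l) : [0,T] → K, l ∈ ℕ, be a sequence of curves with sup_l Diss_D(z^(l); [0,T]) ≤ C < ∞. Then there exist a subsequence (l_n) and a curve z^(∞) : [0,T] → X such that z^(l_n)(t) ⇀ z^(∞)(t) weakly in X for every t ∈ [0,T], and Diss_D(z^(∞); [0,T]) ≤ liminf_{n→∞} Diss_D(z^(l_n); [0,T]). -/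

import Mathlib

/-!
The dissipations `δₗ t = Diss D (zₗ) 0 t` are nondecreasing in `t` and bounded by `C`. A first
subsequence makes `δₗ q` converge to some `d q` at every rational `q`; the monotone function
`t ↦ ⨆ q < t, d q` has only countably many discontinuities. A second, diagonal, subsequence makes
`zₗ t` converge weakly at the rational times, at `T` and at these discontinuities. At any other
time `t`, continuity gives rationals `q₁ < t < q₂` with `d q₂ - d q₁` small; since
`D (zₗ q₁) (zₗ t) ≤ δₗ q₂ - δₗ q₁`, coercivity makes `zₗ t` eventually uniformly close to the weakly
convergent `zₗ q₁`, so `f (zₗ t)` is Cauchy for every functional `f`, and weak sequential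
compactness of `K` identifies the limit. Lower semicontinuity of `D` then passes to every partition
sum, hence to the dissipation.
-/

open Filter Topology Set MeasureTheory
open scoped ENNReal

noncomputable section

/-- Weak convergence of a sequence in a normed space: convergence against every
continuous linear functional. -/
def WeakConv {X : Type*} [NormedAddCommGroup X] [NormedSpace ℝ X]
    (u : ℕ → X) (z : X) : Prop :=
  ∀ f : X →L[ℝ] ℝ, Tendsto (fun n => f (u n)) atTop (𝓝 (f z))

/-- A set is sequentially weakly compact if every sequence in it has a subsequence
converging weakly to a point of the set. -/
def SeqWeaklyCompact {X : Type*} [NormedAddCommGroup X] [NormedSpace ℝ X]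
    (S : Set X) : Prop :=
  ∀ u : ℕ → X, (∀ n, u n ∈ S) →
    ∃ z ∈ S, ∃ φ : ℕ → ℕ, StrictMono φ ∧ WeakConv (fun n => u (φ n)) z

/-- The dissipation of the curve `z` on the interval `[s,t]`, defined as the supremum
over all finite partitions `s = τ₀ < τ₁ < … < τ_N = t` of `∑ⱼ D (z τⱼ₋₁) (z τⱼ)`. -/
def Diss {X : Type*} (D : X → X → ℝ≥0∞) (z : ℝ → X) (s t : ℝ) : ℝ≥0∞ :=
  ⨆ (N : ℕ) (τ : ℕ → ℝ) (_ : τ 0 = s) (_ : τ N = t)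
    (_ : ∀ j < N, τ j < τ (j + 1)),
    ∑ j ∈ Finset.range N, D (z (τ j)) (z (τ (j + 1)))

structure IccPartition (s t : ℝ) where
  N : ℕ
  τ : ℕ → ℝ
  τ_zero : τ 0 = s
  τ_last : τ N = t
  τ_lt_succ : ∀ j < N, τ j < τ (j + 1)

namespace IccPartition

variable {s t : ℝ}

lemma τ_mem (p : IccPartition s t) {j : ℕ} (hj : j ≤ p.N) : p.τ j ∈ Icc s t := by
  have hmono : MonotoneOn p.τ (Iic p.N) :=
    (strictMonoOn_Iic_of_lt_succ fun m hm => by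
      simpa only [Order.succ_eq_add_one] using p.τ_lt_succ m hm).monotoneOn
  constructor
  · simpa only [p.τ_zero] using hmono (mem_Iic.2 (Nat.zero_le _)) hj (Nat.zero_le j)
  · simpa only [p.τ_last] using hmono hj (mem_Iic.2 le_rfl) hj

lemma nonempty_of_lt (h : s < t) : Nonempty (IccPartition s t) :=
  ⟨⟨1, fun j => s + j * (t - s), by simp, by simp, fun j hj => by
    push_cast; nlinarith⟩⟩

def extend (p : IccPartition s t) {b : ℝ} (htb : t < b) : IccPartition s b where
  N := p.N + 1
  τ := Function.update p.τ (p.N + 1) b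
  τ_zero := by simp [p.τ_zero]
  τ_last := by simp
  τ_lt_succ j hj := by
    rcases Nat.lt_succ_iff_lt_or_eq.1 hj with hj | rfl
    · simpa [Function.update_of_ne (show j ≠ p.N + 1 by omega),
        Function.update_of_ne (show j + 1 ≠ p.N + 1 by omega)] using p.τ_lt_succ j hj
    · simpa [p.τ_last] using htb

variable {X : Type*} (D : X → X → ℝ≥0∞) (z : ℝ → X)

def sum (p : IccPartition s t) : ℝ≥0∞ :=
  ∑ j ∈ Finset.range p.N, D (z (p.τ j)) (z (p.τ (j + 1)))

lemma sum_extend (p : IccPartition s t) {b : ℝ} (htb : t < b) :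
    (p.extend htb).sum D z = p.sum D z + D (z t) (z b) := by
  simp only [sum, extend, Finset.sum_range_succ]
  congr 1
  · refine Finset.sum_congr rfl fun j hj => ?_
    have hj := Finset.mem_range.1 hj
    rw [Function.update_of_ne (by omega), Function.update_of_ne (by omega)]
  · rw [Function.update_of_ne (by omega), p.τ_last, Function.update_self]

end IccPartition

section Dissipation

variable {X : Type*} (D : X → X → ℝ≥0∞) (z : ℝ → X) {s t : ℝ}

lemma diss_eq_iSup : Diss D z s t = ⨆ p : IccPartition s t, p.sum D z := by
  refine le_antisymm (iSup_le fun N => iSup_le fun τ => iSup_le fun h0 => iSup_le fun hN =>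
    iSup_le fun hlt => le_iSup (fun p : IccPartition s t => p.sum D z) ⟨N, τ, h0, hN, hlt⟩) ?_
  exact iSup_le fun p => le_iSup_of_le p.N <| le_iSup_of_le p.τ <| le_iSup_of_le p.τ_zero <|
    le_iSup_of_le p.τ_last <| le_iSup_of_le p.τ_lt_succ le_rfl

lemma IccPartition.sum_le_diss (p : IccPartition s t) : p.sum D z ≤ Diss D z s t :=
  (diss_eq_iSup D z).symm ▸ le_iSup (fun p : IccPartition s t => p.sum D z) p

lemma diss_mono {a b : ℝ} (hab : a ≤ b) : Diss D z s a ≤ Diss D z s b := by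
  rcases hab.eq_or_lt with rfl | hab
  · exact le_rfl
  rw [diss_eq_iSup D z]
  exact iSup_le fun p =>
    le_self_add.trans ((p.sum_extend D z hab).symm ▸ (p.extend hab).sum_le_diss D z)

lemma diss_add_le {a b : ℝ} (hsa : s < a) (hab : a < b) :
    Diss D z s a + D (z a) (z b) ≤ Diss D z s b := by
  have : Nonempty (IccPartition s a) := IccPartition.nonempty_of_lt hsa
  rw [diss_eq_iSup D z, ENNReal.iSup_add]
  exact iSup_le fun p => (p.sum_extend D z hab).symm ▸ (p.extend hab).sum_le_diss D z

end Dissipation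

lemma ENNReal.liminf_add_liminf_le (u v : ℕ → ℝ≥0∞) :
    liminf u atTop + liminf v atTop ≤ liminf (u + v) atTop := by
  simp only [liminf_eq_iSup_iInf_of_nat]
  rw [ENNReal.iSup_add_iSup_of_monotone (fun _ _ h => biInf_mono fun _ => h.trans)
    (fun _ _ h => biInf_mono fun _ => h.trans)]
  exact iSup_mono fun n => le_iInf₂ fun i hi => add_le_add (iInf₂_le i hi) (iInf₂_le i hi)

lemma ENNReal.sum_liminf_le_liminf_sum {ι : Type*} (s : Finset ι) (f : ι → ℕ → ℝ≥0∞) :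
    ∑ i ∈ s, liminf (f i) atTop ≤ liminf (fun n => ∑ i ∈ s, f i n) atTop := by
  classical
  induction s using Finset.induction with
  | empty => simp
  | insert a s has ih =>
    simp only [Finset.sum_insert has]
    exact (add_le_add le_rfl ih).trans (ENNReal.liminf_add_liminf_le _ _)

theorem diss_le_liminf_of_weakConv {X : Type*} [NormedAddCommGroup X] [NormedSpace ℝ X]
    {D : X → X → ℝ≥0∞}
    (hDlsc : ∀ (u v : ℕ → X) (z w : X), WeakConv u z → WeakConv v w →
      D z w ≤ liminf (fun j => D (u j) (v j)) atTop)
    {z : ℕ → ℝ → X} {z' : ℝ → X} {s t : ℝ}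
    (hz : ∀ r ∈ Icc s t, WeakConv (fun n => z n r) (z' r)) :
    Diss D z' s t ≤ liminf (fun n => Diss D (z n) s t) atTop := by
  rw [diss_eq_iSup]
  refine iSup_le fun p => ?_
  calc p.sum D z'
      ≤ ∑ j ∈ Finset.range p.N, liminf (fun n => D (z n (p.τ j)) (z n (p.τ (j + 1)))) atTop :=
        Finset.sum_le_sum fun j hj => hDlsc _ _ _ _
          (hz _ (p.τ_mem (Finset.mem_range.1 hj).le)) (hz _ (p.τ_mem (Finset.mem_range.1 hj)))
    _ ≤ liminf (fun n => p.sum D (z n)) atTop := ENNReal.sum_liminf_le_liminf_sum _ _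
    _ ≤ liminf (fun n => Diss D (z n) s t) atTop :=
        liminf_le_liminf (Eventually.of_forall fun n => p.sum_le_diss D (z n))

lemma cauchySeq_of_forall_eventually_dist_lt {α : Type*} [PseudoMetricSpace α] {a : ℕ → α}
    (h : ∀ ε > 0, ∃ b : ℕ → α, CauchySeq b ∧ ∀ᶠ n in atTop, dist (a n) (b n) < ε) :
    CauchySeq a := by
  refine Metric.cauchySeq_iff.2 fun ε hε => ?_
  obtain ⟨b, hb, hab⟩ := h (ε / 3) (by positivity)
  obtain ⟨N₁, hN₁⟩ := Metric.cauchySeq_iff.1 hb (ε / 3) (by positivity)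
  obtain ⟨N₂, hN₂⟩ := eventually_atTop.1 hab
  refine ⟨max N₁ N₂, fun m hm n hn => ?_⟩
  rw [ge_iff_le, max_le_iff] at hm hn
  calc dist (a m) (a n) ≤ dist (a m) (b m) + dist (b m) (b n) + dist (b n) (a n) :=
        dist_triangle4 _ _ _ _
    _ < ε / 3 + ε / 3 + ε / 3 := by
        gcongr
        exacts [hN₂ m hm.2, hN₁ m hm.1 n hn.1, dist_comm (b n) (a n) ▸ hN₂ n hn.2]
    _ = ε := by ring

section WeakConvergence

variable {X : Type*} [NormedAddCommGroup X] [NormedSpace ℝ X]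

lemma WeakConv.comp_strictMono {u : ℕ → X} {x : X} (h : WeakConv u x) {ψ : ℕ → ℕ}
    (hψ : StrictMono ψ) : WeakConv (u ∘ ψ) x :=
  fun f => (h f).comp hψ.tendsto_atTop

lemma WeakConv.of_add_nat {u : ℕ → X} {x : X} {k : ℕ} (h : WeakConv (fun n => u (n + k)) x) :
    WeakConv u x :=
  fun f => (tendsto_add_atTop_iff_nat k).1 (h f)

theorem SeqWeaklyCompact.exists_weakConv_of_approx {K : Set X} (hK : SeqWeaklyCompact K)
    {u : ℕ → X} (hu : ∀ n, u n ∈ K)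
    (happrox : ∀ ε > 0, ∃ v : ℕ → X, (∃ y, WeakConv v y) ∧ ∀ᶠ n in atTop, ‖u n - v n‖ < ε) :
    ∃ x ∈ K, WeakConv u x := by
  obtain ⟨x, hxK, ψ, hψ, hx⟩ := hK u hu
  refine ⟨x, hxK, fun f => ?_⟩
  have hcauchy : CauchySeq fun n => f (u n) := by
    refine cauchySeq_of_forall_eventually_dist_lt fun ε hε => ?_
    obtain ⟨v, ⟨y, hv⟩, huv⟩ := happrox (ε / (‖f‖ + 1)) (by positivity)
    refine ⟨fun n => f (v n), (hv f).cauchySeq, huv.mono fun n hn => ?_⟩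
    calc dist (f (u n)) (f (v n)) = ‖f (u n - v n)‖ := by rw [dist_eq_norm, map_sub]
      _ ≤ ‖f‖ * ‖u n - v n‖ := f.le_opNorm _
      _ ≤ (‖f‖ + 1) * ‖u n - v n‖ := by gcongr; linarith
      _ < (‖f‖ + 1) * (ε / (‖f‖ + 1)) := by gcongr
      _ = ε := by field_simp
  obtain ⟨L, hL⟩ := cauchySeq_tendsto_of_complete hcauchy
  rwa [tendsto_nhds_unique (hL.comp hψ.tendsto_atTop) (hx f)] at hL

end WeakConvergence

theorem exists_strictMono_forall_of_exists_subseq (P : ℕ → (ℕ → ℕ) → Prop)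
    (h_comp : ∀ k φ (ψ : ℕ → ℕ), StrictMono ψ → P k φ → P k (φ ∘ ψ))
    (h_tail : ∀ k (φ : ℕ → ℕ), P k (fun n => φ (n + k)) → P k φ)
    (h_ex : ∀ k (φ : ℕ → ℕ), ∃ ψ : ℕ → ℕ, StrictMono ψ ∧ P k (φ ∘ ψ)) :
    ∃ φ : ℕ → ℕ, StrictMono φ ∧ ∀ k, P k φ := by
  choose ψ hψ hPψ using h_ex
  -- `E k` is the `k`-th of the nested extractions; the diagonal `n ↦ E n n` is, from index `k`
  -- on, an extraction of `E k`.
  let E : ℕ → ℕ → ℕ := fun k => Nat.rec (ψ 0 id) (fun k Ek => Ek ∘ ψ (k + 1) Ek) k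
  have hE : ∀ k, StrictMono (E k) ∧ P k (E k) := by
    intro k
    induction k with
    | zero => exact ⟨hψ 0 id, hPψ 0 id⟩
    | succ k ih => exact ⟨ih.1.comp (hψ _ _), hPψ _ _⟩
  have hE_nested : ∀ k j n, ∃ m, E (k + j) n = E k m := by
    intro k j
    induction j with
    | zero => exact fun n => ⟨n, rfl⟩
    | succ j ih => exact fun n => ih (ψ (k + j + 1) (E (k + j)) n)
  have hφ : StrictMono fun n => E n n := strictMono_nat_of_lt_succ fun n =>
    (hE n).1 ((Nat.lt_succ_self n).trans_le ((hψ _ _).le_apply))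
  refine ⟨fun n => E n n, hφ, fun k => h_tail k _ ?_⟩
  choose m hm using fun n => hE_nested k n (n + k)
  have hm_mono : StrictMono m := fun a b hab => (hE k).1.lt_iff_lt.1 <| by
    rw [← hm, ← hm, Nat.add_comm k a, Nat.add_comm k b]
    exact hφ (by omega)
  have : (fun n => E (n + k) (n + k)) = E k ∘ m := by
    funext n; rw [Function.comp_apply, ← hm, Nat.add_comm k n]
  rw [this]
  exact h_comp k _ _ hm_mono (hE k).2

theorem SeqWeaklyCompact.exists_subseq_forall_weakConv {X : Type*} [NormedAddCommGroup X]
    [NormedSpace ℝ X] {K : Set X} (hK : SeqWeaklyCompact K) {ι : Type*} [Countable ι]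
    (u : ι → ℕ → X) (hu : ∀ i n, u i n ∈ K) :
    ∃ φ : ℕ → ℕ, StrictMono φ ∧ ∀ i, ∃ x ∈ K, WeakConv (fun n => u i (φ n)) x := by
  cases isEmpty_or_nonempty ι
  · exact ⟨id, strictMono_id, isEmptyElim⟩
  obtain ⟨e, he⟩ := exists_surjective_nat ι
  obtain ⟨φ, hφ, hconv⟩ := exists_strictMono_forall_of_exists_subseq
    (fun k φ => ∃ x ∈ K, WeakConv (fun n => u (e k) (φ n)) x)
    (fun _ _ _ hψ ⟨x, hxK, hx⟩ => ⟨x, hxK, hx.comp_strictMono hψ⟩)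
    (fun _ _ ⟨x, hxK, hx⟩ => ⟨x, hxK, hx.of_add_nat⟩)
    (fun k φ => by
      obtain ⟨x, hxK, ψ, hψ, hx⟩ := hK _ fun n => hu (e k) (φ n)
      exact ⟨ψ, hψ, x, hxK, hx⟩)
  exact ⟨φ, hφ, he.forall.2 hconv⟩

def ratSupBelow (d : ℚ → ℝ≥0∞) (t : ℝ) : ℝ≥0∞ := ⨆ (q : ℚ) (_ : (q : ℝ) < t), d q

section RatSupBelow

variable {d : ℚ → ℝ≥0∞}

lemma monotone_ratSupBelow : Monotone (ratSupBelow d) :=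
  fun _ _ h => biSup_mono fun _ hq => hq.trans_le h

lemma le_ratSupBelow {q : ℚ} {t : ℝ} (h : (q : ℝ) < t) : d q ≤ ratSupBelow d t :=
  le_iSup₂ (f := fun (q : ℚ) (_ : (q : ℝ) < t) => d q) q h

lemma Monotone.ratSupBelow_le (hd : Monotone d) (q : ℚ) : ratSupBelow d q ≤ d q :=
  iSup₂_le fun _ h => hd (by exact_mod_cast h.le)

lemma Monotone.exists_rat_tsub_lt_of_continuousAt (hd : Monotone d) {t : ℝ}
    (hcont : ContinuousAt (ratSupBelow d) t) (hfin : ratSupBelow d t ≠ ⊤) {a b : ℝ}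
    (ha : a < t) (hb : t < b) {ε : ℝ≥0∞} (hε : 0 < ε) :
    ∃ q₁ q₂ : ℚ, a < q₁ ∧ (q₁ : ℝ) < t ∧ t < q₂ ∧ (q₂ : ℝ) < b ∧ d q₂ - d q₁ < ε := by
  have hlim : Tendsto (fun p : ℝ × ℝ => ratSupBelow d p.2 - ratSupBelow d p.1) (𝓝 (t, t))
      (𝓝 0) := by
    simpa using ENNReal.Tendsto.sub (hcont.tendsto.comp (continuousAt_snd (p := (t, t))))
      (hcont.tendsto.comp (continuousAt_fst (p := (t, t)))) (Or.inl hfin)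
  obtain ⟨η, hη, hsmall⟩ := Metric.eventually_nhds_iff.1 (hlim.eventually (gt_mem_nhds hε))
  obtain ⟨q₁, hq₁, hq₁t⟩ := exists_rat_btwn (max_lt ha (sub_lt_self t hη))
  obtain ⟨q₂, htq₂, hq₂⟩ := exists_rat_btwn (lt_min hb (lt_add_of_pos_right t hη))
  obtain ⟨r, hq₂r, hr⟩ := exists_between hq₂
  rw [max_lt_iff] at hq₁
  rw [lt_min_iff] at hq₂ hr
  refine ⟨q₁, q₂, hq₁.1, hq₁t, htq₂, hq₂.1, ?_⟩
  calc d q₂ - d q₁ ≤ ratSupBelow d r - ratSupBelow d q₁ :=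
        tsub_le_tsub (le_ratSupBelow hq₂r) (hd.ratSupBelow_le q₁)
    _ < ε := @hsmall (q₁, r) <| by
        rw [Prod.dist_eq, max_lt_iff, Real.dist_eq, Real.dist_eq, abs_lt, abs_lt]
        refine ⟨⟨?_, ?_⟩, ?_, ?_⟩ <;> linarith

end RatSupBelow

theorem exists_rat_eventually_lt_of_continuousAt {X : Type*} {D : X → X → ℝ≥0∞}
    {z : ℕ → ℝ → X} {d : ℚ → ℝ≥0∞} {s t T : ℝ} {C : ℝ≥0∞}
    (hd : ∀ q : ℚ, Tendsto (fun n => Diss D (z n) s q) atTop (𝓝 (d q)))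
    (hC : C ≠ ⊤) (hbound : ∀ n, Diss D (z n) s T ≤ C) (hst : s < t) (htT : t < T)
    (hcont : ContinuousAt (ratSupBelow d) t) {ε : ℝ≥0∞} (hε : 0 < ε) :
    ∃ q : ℚ, (q : ℝ) ∈ Ioo s t ∧ ∀ᶠ n in atTop, D (z n q) (z n t) < ε := by
  have hdiss_fin : ∀ n {r : ℝ}, r ≤ T → Diss D (z n) s r ≠ ⊤ := fun n r hr =>
    ne_top_of_le_ne_top hC ((diss_mono D (z n) hr).trans (hbound n))
  have hd_mono : Monotone d := fun q q' h => le_of_tendsto_of_tendsto' (hd q) (hd q') fun n =>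
    diss_mono D (z n) (by exact_mod_cast h)
  have hdC : ∀ q : ℚ, (q : ℝ) ≤ T → d q ≤ C := fun q hq =>
    le_of_tendsto' (hd q) fun n => (diss_mono D (z n) hq).trans (hbound n)
  have hfin : ratSupBelow d t ≠ ⊤ :=
    ne_top_of_le_ne_top hC (iSup₂_le fun q hq => hdC q (hq.le.trans htT.le))
  obtain ⟨q₁, q₂, hsq₁, hq₁t, htq₂, hq₂T, hq⟩ :=
    hd_mono.exists_rat_tsub_lt_of_continuousAt hcont hfin hst htT hε
  have hlim : Tendsto (fun n => Diss D (z n) s q₂ - Diss D (z n) s q₁) atTop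
      (𝓝 (d q₂ - d q₁)) :=
    ENNReal.Tendsto.sub (hd q₂) (hd q₁) (Or.inl (ne_top_of_le_ne_top hC (hdC q₂ hq₂T.le)))
  refine ⟨q₁, ⟨hsq₁, hq₁t⟩, (hlim.eventually_lt_const hq).mono fun n hn => lt_of_le_of_lt ?_ hn⟩
  exact ENNReal.le_sub_of_add_le_left (hdiss_fin n (hq₁t.trans htT).le)
    ((diss_add_le D (z n) hsq₁ hq₁t).trans (diss_mono D (z n) htq₂.le))

lemma norm_sub_lt_of_lt_ofReal {X : Type*} [NormedAddCommGroup X] {D : X → X → ℝ≥0∞} {cD : ℝ}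
    (hcD : 0 < cD) (hDcoer : ∀ z0 z1 : X, ENNReal.ofReal (cD * ‖z1 - z0‖) ≤ D z0 z1)
    {x y : X} {ε : ℝ} (h : D x y < ENNReal.ofReal (cD * ε)) : ‖y - x‖ < ε :=
  lt_of_mul_lt_mul_left ((ENNReal.ofReal_lt_ofReal_iff'.1 ((hDcoer x y).trans_lt h)).1) hcD.le

theorem helly_selection_principle_general
    {X : Type*} [NormedAddCommGroup X] [NormedSpace ℝ X]
    (T cD : ℝ) (hcD : 0 < cD)
    (D : X → X → ℝ≥0∞)
    (hDcoer : ∀ z0 z1 : X, ENNReal.ofReal (cD * ‖z1 - z0‖) ≤ D z0 z1)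
    (hDlsc : ∀ (u v : ℕ → X) (z w : X), WeakConv u z → WeakConv v w →
      D z w ≤ liminf (fun j => D (u j) (v j)) atTop)
    (K : Set X) (hK : SeqWeaklyCompact K)
    (zl : ℕ → ℝ → X) (hzlK : ∀ l : ℕ, ∀ s ∈ Icc (0:ℝ) T, zl l s ∈ K)
    (C : ℝ≥0∞) (hC : C ≠ ⊤) (hDiss : ∀ l : ℕ, Diss D (zl l) 0 T ≤ C) :
    ∃ φ : ℕ → ℕ, StrictMono φ ∧ ∃ zinf : ℝ → X,
      (∀ s ∈ Icc (0:ℝ) T, WeakConv (fun n => zl (φ n) s) (zinf s)) ∧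
      Diss D zinf 0 T ≤ liminf (fun n => Diss D (zl (φ n)) 0 T) atTop := by
  obtain ⟨d, φ₁, hφ₁, hd⟩ := CompactSpace.tendsto_subseq fun n (q : ℚ) => Diss D (zl n) 0 q
  rw [tendsto_pi_nhds] at hd
  set S : Set ℝ := {t ∈ Icc 0 T |
    t ∈ range ((↑) : ℚ → ℝ) ∨ t = T ∨ ¬ContinuousAt (ratSupBelow d) t}
  have hS : S.Countable := ((countable_range _).union ((countable_singleton T).union
    monotone_ratSupBelow.countable_not_continuousAt)).mono fun t ht => ht.2
  have := hS.to_subtype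
  obtain ⟨φ₂, hφ₂, hconvS⟩ := hK.exists_subseq_forall_weakConv
    (fun (t : S) n => zl (φ₁ n) t) fun t n => hzlK _ _ t.2.1
  have hconv : ∀ t ∈ Icc 0 T, ∃ x ∈ K, WeakConv (fun n => zl (φ₁ (φ₂ n)) t) x := by
    intro t ht
    by_cases htS : t ∈ S
    · exact hconvS ⟨t, htS⟩
    obtain ⟨hirr, htT, hcont⟩ :
        t ∉ range ((↑) : ℚ → ℝ) ∧ t ≠ T ∧ ContinuousAt (ratSupBelow d) t := by
      simpa only [S, mem_ofPred_eq, ht, true_and, not_or, not_not] using htS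
    have ht0 : 0 < t := ht.1.lt_of_ne fun h => hirr ⟨0, by simp [h]⟩
    refine hK.exists_weakConv_of_approx (fun n => hzlK _ _ ht) fun ε hε => ?_
    obtain ⟨q, hq, hDq⟩ := exists_rat_eventually_lt_of_continuousAt
      (fun q => (hd q).comp hφ₂.tendsto_atTop) hC (fun n => hDiss _) ht0 (ht.2.lt_of_ne htT)
      hcont (ε := ENNReal.ofReal (cD * ε)) (by positivity)
    obtain ⟨x, -, hx⟩ := hconvS ⟨q, ⟨hq.1.le, hq.2.le.trans ht.2⟩, Or.inl ⟨q, rfl⟩⟩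
    exact ⟨_, ⟨x, hx⟩, hDq.mono fun n hn => norm_sub_lt_of_lt_ofReal hcD hDcoer hn⟩
  choose! zinf _ hzinf using hconv
  exact ⟨φ₁ ∘ φ₂, hφ₁.comp hφ₂, zinf, hzinf, diss_le_liminf_of_weakConv hDlsc hzinf⟩

/-- Helly-type selection principle: a sequence of curves with values in a sequentially weakly
compact set and uniformly bounded dissipation has a pointwise weakly convergent subsequence,
and the dissipation is sequentially weakly lower semicontinuous along it. -/
theorem helly_selection_principle
    {X : Type*} [NormedAddCommGroup X] [NormedSpace ℝ X] [CompleteSpace X]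
    (T cD : ℝ) (hT : 0 < T) (hcD : 0 < cD)
    (D : X → X → ℝ≥0∞)
    (hDtri : ∀ z1 z2 z3 : X, D z1 z3 ≤ D z1 z2 + D z2 z3)
    (hDcoer : ∀ z0 z1 : X, ENNReal.ofReal (cD * ‖z1 - z0‖) ≤ D z0 z1)
    (hDlsc : ∀ (u v : ℕ → X) (z w : X), WeakConv u z → WeakConv v w →
      D z w ≤ liminf (fun j => D (u j) (v j)) atTop)
    (K : Set X) (hK : SeqWeaklyCompact K)
    (zl : ℕ → ℝ → X) (hzlK : ∀ l : ℕ, ∀ s ∈ Icc (0:ℝ) T, zl l s ∈ K)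
    (C : ℝ≥0∞) (hC : C ≠ ⊤) (hDiss : ∀ l : ℕ, Diss D (zl l) 0 T ≤ C) :
    ∃ φ : ℕ → ℕ, StrictMono φ ∧ ∃ zinf : ℝ → X,
      (∀ s ∈ Icc (0:ℝ) T, WeakConv (fun n => zl (φ n) s) (zinf s)) ∧
      Diss D zinf 0 T ≤ liminf (fun n => Diss D (zl (φ n)) 0 T) atTop :=
  helly_selection_principle_general T cD hcD D hDcoer hDlsc K hK zl hzlK C hC hDiss
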